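/- There exists a class ℒ of recursive languages such that ℒ ∈ [TxtSdEx_C]_REC but ℒ ∉ [TxtItEx_C]_REC; that is, some partial computable set-driven learner Ex_C-learns every member of ℒ, but no partial computable iterative learner Ex_C-learns every member of ℒ. -/

import Mathlib

/-!
The class consists of `{1}ᶜ` and the finite sets containing `1`. A set-driven learner conjectures
its data `D` if `1 ∈ D`, and `{1}ᶜ` otherwise; since this depends on `D` only, it is eventually
constant on every text for a member of the class.

An iterative learner for `{1}ᶜ` must, after some finite sequence `σ`, reach a state `e` that no
datum `x ≠ 1` changes (otherwise the data moving the state could be woven into a text for `{1}ᶜ`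
on which it never converges). For fresh `a ≠ b`, the texts `σ a 1 1 1 …` and `σ b 1 1 1 …` are
both in state `e` after `σ`, then coincide, so the learner converges to the same hypothesis on
both, although their contents differ.
-/

namespace InductiveInference

/-- `φ_e` : the `e`-th partial computable function, via the standard numbering
of `Nat.Partrec.Code`. -/
def phi (e : ℕ) : ℕ →. ℕ := (Denumerable.ofNat Nat.Partrec.Code e).eval

/-- `W_e` : the domain of `φ_e`. -/
def Wset (e : ℕ) : Set ℕ := (phi e).Dom

/-- `e` is a C-index: `φ_e` is total with values in `{0,1}`. -/
def CIndex (e : ℕ) : Prop := ∀ x, phi e x = Part.some 0 ∨ phi e x = Part.some 1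

/-- `C_e = {x | φ_e x = 1}`. -/
def Cset (e : ℕ) : Set ℕ := {x | phi e x = Part.some 1}

/-- A language is recursive (decidable). -/
def RecLang (L : Set ℕ) : Prop := ∃ f : ℕ → Bool, Computable f ∧ ∀ x, x ∈ L ↔ f x = true

/-- Texts: total functions `ℕ → ℕ ∪ {#}`; `none` is the pause symbol `#`. -/
abbrev Text := ℕ → Option ℕ

/-- The content of a text: its range minus the pause symbol. -/
def content (T : Text) : Set ℕ := {x | ∃ n, T n = some x}

/-- The initial segment `T[n] = (T 0, …, T (n-1))`. -/
def initSeg (T : Text) (n : ℕ) : List (Option ℕ) := (List.range n).map T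

/-- The (finite) content of the initial segment `T[n]`. -/
def fincontent (T : Text) (n : ℕ) : Finset ℕ := ((initSeg T n).filterMap id).toFinset

/-- A canonical numerical code for a finite set of naturals. -/
def setCode (D : Finset ℕ) : ℕ := Encodable.encode (D.sort (· ≤ ·))

/-- Learners: partial functions on (suitably coded) natural number inputs. -/
abbrev Learner := ℕ →. ℕ

/-- The learner is partial computable. -/
def PartComputable (h : Learner) : Prop := Nat.Partrec h

/-- The learner is total computable. -/
def TotalComputable (h : Learner) : Prop := Nat.Partrec h ∧ ∀ x, (h x).Dom

/-- Hypothesis sequences (possibly undefined at some points). -/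
abbrev HypSeq := ℕ → Part ℕ

/-- Gold-style (full-information) learning: `G(h,T)(i) = h(T[i])`. -/
def Gop (h : Learner) (T : Text) (i : ℕ) : Part ℕ :=
  h (Encodable.encode (initSeg T i))

/-- Partially set-driven learning: `Psd(h,T)(i) = h(content T[i], i)`. -/
def Psdop (h : Learner) (T : Text) (i : ℕ) : Part ℕ :=
  h (Nat.pair (setCode (fincontent T i)) i)

/-- Set-driven learning: `Sd(h,T)(i) = h(content T[i])`. -/
def Sdop (h : Learner) (T : Text) (i : ℕ) : Part ℕ :=
  h (setCode (fincontent T i))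

/-- Iterative learning: the input `none` codes the empty start sequence `ε`,
and `some (e, x)` codes the pair of previous hypothesis `e` and datum `x`. -/
def Itop (h : Learner) (T : Text) : ℕ → Part ℕ
  | 0 => h (Encodable.encode (none : Option (ℕ × Option ℕ)))
  | i + 1 => (Itop h T i).bind fun e =>
      h (Encodable.encode (some (e, T i) : Option (ℕ × Option ℕ)))

/-- Transductive learning: the learner receives the single (coded) datum
`T i`; the output `0` codes the distinguished symbol `?`, and the output
`e + 1` codes the hypothesis `e`.  The value `?` of the hypothesis sequence
is represented by `Part.none`. -/
def Tdop (h : Learner) (T : Text) : ℕ → Part ℕ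
  | 0 => Part.none
  | i + 1 => (h (Encodable.encode (T i))).bind fun v =>
      match v with
      | 0 => Tdop h T i
      | e + 1 => Part.some e

/-- `Ex_C`: syntactic convergence to a single correct C-index. -/
def ExC (p : HypSeq) (T : Text) : Prop :=
  ∃ n₀, (∀ n, n₀ ≤ n → p n = p n₀) ∧
    ∃ e, p n₀ = Part.some e ∧ CIndex e ∧ Cset e = content T

/-- `Ex_W`: syntactic convergence to a single correct W-index. -/
def ExW (p : HypSeq) (T : Text) : Prop :=
  ∃ n₀, (∀ n, n₀ ≤ n → p n = p n₀) ∧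
    ∃ e, p n₀ = Part.some e ∧ Wset e = content T

/-- `Bc_C`: semantic convergence to correct C-indices. -/
def BcC (p : HypSeq) (T : Text) : Prop :=
  ∃ n₀, ∀ n, n₀ ≤ n → ∃ e, p n = Part.some e ∧ CIndex e ∧ Cset e = content T

/-- `Bc_W`: semantic convergence to correct W-indices. -/
def BcW (p : HypSeq) (T : Text) : Prop :=
  ∃ n₀, ∀ n, n₀ ≤ n → ∃ e, p n = Part.some e ∧ Wset e = content T

/-- `CInd`: every hypothesis output is a C-index. -/
def CIndRes (p : HypSeq) (_T : Text) : Prop :=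
  ∀ i e, p i = Part.some e → CIndex e

/-- `T`: the always-true restriction. -/
def TrueRes (_p : HypSeq) (_T : Text) : Prop := True

abbrev InteractionOp := Learner → Text → HypSeq
abbrev Restriction := HypSeq → Text → Prop

/-- Conjunction of restrictions. -/
def andRes (δ δ' : Restriction) : Restriction := fun p T => δ p T ∧ δ' p T

/-- `h` `Txtβδ`-learns `L`: on every text for `L` the restriction `δ` holds. -/
def Learns (β : InteractionOp) (δ : Restriction) (h : Learner) (L : Set ℕ) : Prop :=
  ∀ T : Text, content T = L → δ (β h T) T

/-- The restriction `α` holds for `h` on all texts whatsoever. -/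
def OnAllTexts (β : InteractionOp) (α : Restriction) (h : Learner) : Prop :=
  ∀ T : Text, α (β h T) T

/-- A class of recursive languages. -/
def IsRecClass (ℒ : Set (Set ℕ)) : Prop := ∀ L ∈ ℒ, RecLang L

/-- `[𝒞Txtβδ]_REC`: classes of recursive languages learnable by some
learner from `C` under interaction operator `β` and restriction `δ`. -/
def LearnableREC (C : Learner → Prop) (β : InteractionOp) (δ : Restriction) :
    Set (Set (Set ℕ)) :=
  {ℒ | IsRecClass ℒ ∧ ∃ h, C h ∧ ∀ L ∈ ℒ, Learns β δ h L}

/-- `[τ(α)𝒞Txtβδ]_REC`: as above, where additionally `α` must hold on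
arbitrary texts. -/
def TauLearnableREC (C : Learner → Prop) (α : Restriction) (β : InteractionOp)
    (δ : Restriction) : Set (Set (Set ℕ)) :=
  {ℒ | IsRecClass ℒ ∧ ∃ h, C h ∧ OnAllTexts β α h ∧ ∀ L ∈ ℒ, Learns β δ h L}

open Filter Encodable Nat.Partrec

theorem exists_text (L : Set ℕ) : ∃ T : Text, content T = L := by
  classical
  refine ⟨fun n => if n ∈ L then some n else none,
    Set.ext fun x => ⟨?_, fun hx => ⟨x, by simp [hx]⟩⟩⟩
  rintro ⟨n, hn⟩
  by_cases h : n ∈ L <;> simp only [h, if_true, if_false, reduceCtorEq, Option.some.injEq] at hn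
  exact hn ▸ h

theorem exC_iff {p : HypSeq} {T : Text} :
    ExC p T ↔ ∃ e, CIndex e ∧ Cset e = content T ∧ ∀ᶠ n in atTop, p n = Part.some e := by
  constructor
  · rintro ⟨n₀, hstab, e, he, hC, hL⟩
    exact ⟨e, hC, hL, eventually_atTop.2 ⟨n₀, fun n hn => (hstab n hn).trans he⟩⟩
  · rintro ⟨e, hC, hL, hp⟩
    obtain ⟨n₀, hn₀⟩ := eventually_atTop.1 hp
    exact ⟨n₀, fun n hn => (hn₀ n hn).trans (hn₀ n₀ le_rfl).symm, e, hn₀ n₀ le_rfl, hC, hL⟩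

theorem ExC.content_eq {p q : HypSeq} {T₁ T₂ : Text} (h₁ : ExC p T₁) (h₂ : ExC q T₂)
    (hpq : ∀ᶠ n in atTop, p n = q n) : content T₁ = content T₂ := by
  obtain ⟨e₁, -, hL₁, hp⟩ := exC_iff.1 h₁
  obtain ⟨e₂, -, hL₂, hq⟩ := exC_iff.1 h₂
  obtain ⟨n, hpn, hqn, hn⟩ := (hp.and (hq.and hpq)).exists
  rw [← hL₁, ← hL₂, Part.some_injective (hpn.symm.trans (hn.trans hqn))]

theorem partrec_phi (e : ℕ) : Partrec (phi e) :=
  Code.eval_part.comp (Computable.const _) Computable.id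

theorem recLang_cset {e : ℕ} (he : CIndex e) : RecLang (Cset e) := by
  classical
  refine ⟨fun x => decide (phi e x = Part.some 1), ?_, fun x => by simp [Cset]⟩
  refine (partrec_phi e).map (g := fun _ v => decide (v = 1))
    (Primrec.eq.comp Primrec.snd (Primrec.const 1)).decide.to_comp |>.of_eq_tot fun x => ?_
  rcases he x with h | h <;> simp [h]

theorem Learns.recLang {β : InteractionOp} {h : Learner} {L : Set ℕ} (hL : Learns β ExC h L) :
    RecLang L := by
  obtain ⟨T, hT⟩ := exists_text L
  obtain ⟨e, he, hC, -⟩ := exC_iff.1 (hL T hT)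
  exact hT ▸ hC ▸ recLang_cset he

theorem phi_encode (c : Code) : phi (encode c) = c.eval := by
  simp [phi, Denumerable.ofNat_encode]

theorem exists_primrec_cIndex_family {f : ℕ → ℕ → Bool} (hf : Primrec₂ f) :
    ∃ g : ℕ → ℕ, Primrec g ∧ ∀ n, CIndex (g n) ∧ Cset (g n) = {x | f n x = true} := by
  obtain ⟨c, hc⟩ := Code.exists_code.1 <| Partrec.nat_iff.1 <|
    (Primrec.cond (hf.comp (Primrec.fst.comp Primrec.unpair) (Primrec.snd.comp Primrec.unpair))
      (Primrec.const 1) (Primrec.const 0)).to_comp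
  have hphi : ∀ n x, phi (encode (c.curry n)) x = Part.some (cond (f n x) 1 0) := by
    intro n x
    simp [phi_encode, Code.eval_curry, hc]
  refine ⟨fun n => encode (c.curry n),
    Primrec.encode.comp (Code.primrec₂_curry.comp (Primrec.const c) Primrec.id), fun n => ⟨?_, ?_⟩⟩
  · intro x
    cases hfx : f n x <;> simp [hphi, hfx]
  · ext x
    cases hfx : f n x <;> simp [Cset, hphi, hfx]

def separatingClass : Set (Set ℕ) := insert {1}ᶜ {F | F.Finite ∧ 1 ∈ F}

def sdConjecture (l : List ℕ) (x : ℕ) : Bool := if 1 ∈ l then x ∈ l else x ≠ 1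

theorem primrec₂_sdConjecture :
    Primrec₂ fun n x => sdConjecture (Denumerable.ofNat (List ℕ) n) x := by
  have hmem : PrimrecRel fun (l : List ℕ) (x : ℕ) => x ∈ l :=
    (PrimrecRel.exists_mem_list Primrec.eq).of_eq fun l x => by simp
  refine Primrec.ite (hmem.comp (Primrec.ofNat _ |>.comp Primrec.fst) (Primrec.const 1))
    (hmem.decide.comp (Primrec.ofNat _ |>.comp Primrec.fst) Primrec.snd)
    (Primrec.not.comp (Primrec.eq.comp Primrec.snd (Primrec.const 1)).decide) |>.of_eq
    fun p => ?_
  simp [sdConjecture]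

noncomputable def sdIndex : ℕ → ℕ :=
  (exists_primrec_cIndex_family primrec₂_sdConjecture).choose

theorem primrec_sdIndex : Primrec sdIndex :=
  (exists_primrec_cIndex_family primrec₂_sdConjecture).choose_spec.1

theorem sdIndex_spec (n : ℕ) : CIndex (sdIndex n) ∧
    Cset (sdIndex n) = {x | sdConjecture (Denumerable.ofNat (List ℕ) n) x = true} :=
  (exists_primrec_cIndex_family primrec₂_sdConjecture).choose_spec.2 n

theorem cset_sdIndex_setCode (D : Finset ℕ) :
    Cset (sdIndex (setCode D)) = if 1 ∈ D then ↑D else {1}ᶜ := by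
  rw [(sdIndex_spec _).2]
  ext x
  simp only [setCode, Denumerable.ofNat_encode, sdConjecture, Finset.mem_sort]
  split_ifs <;> simp

/-- Data without `1` are all sent to the code of `∅`, so that on texts for `{1}ᶜ` the hypothesis
never changes. -/
noncomputable def sdLearner : Learner := fun n =>
  Part.some (sdIndex (if 1 ∈ Denumerable.ofNat (List ℕ) n then n else setCode ∅))

theorem partComputable_sdLearner : PartComputable sdLearner := by
  have hmem : PrimrecPred fun n => 1 ∈ Denumerable.ofNat (List ℕ) n :=
    ((PrimrecRel.exists_mem_list Primrec.eq).comp (Primrec.ofNat _) (Primrec.const 1)).of_eq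
      fun n => by simp
  exact Partrec.nat_iff.1
    (primrec_sdIndex.comp (Primrec.ite hmem Primrec.id (Primrec.const _))).to_comp

theorem sdop_sdLearner (T : Text) (i : ℕ) :
    Sdop sdLearner T i = Part.some (sdIndex (setCode
      (if 1 ∈ fincontent T i then fincontent T i else ∅))) := by
  simp only [Sdop, sdLearner, setCode, Denumerable.ofNat_encode, Finset.mem_sort]
  split_ifs <;> rfl

theorem mem_fincontent {T : Text} {n x : ℕ} : x ∈ fincontent T n ↔ ∃ m < n, T m = some x := by
  simp [fincontent, initSeg]

theorem fincontent_subset_content (T : Text) (n : ℕ) : ↑(fincontent T n) ⊆ content T :=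
  fun _ hx => (mem_fincontent.1 hx).imp fun _ => And.right

theorem eventually_fincontent_eq {T : Text} (hT : (content T).Finite) :
    ∀ᶠ n in atTop, ↑(fincontent T n) = content T := by
  have hmem : ∀ᶠ n in atTop, ∀ x ∈ content T, x ∈ fincontent T n := by
    refine hT.eventually_all.2 fun x ⟨m, hm⟩ => eventually_atTop.2 ⟨m + 1, fun n hn => ?_⟩
    exact mem_fincontent.2 ⟨m, by omega, hm⟩
  exact hmem.mono fun n hn => (fincontent_subset_content T n).antisymm hn

theorem learns_sdLearner : ∀ L ∈ separatingClass, Learns Sdop ExC sdLearner L := by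
  rintro L hL T rfl
  rcases hL with hL | ⟨hfin, hone⟩
  · have hD : ∀ i, 1 ∉ fincontent T i := fun i h1 =>
      (hL ▸ fincontent_subset_content T i h1 : (1 : ℕ) ∈ ({1}ᶜ : Set ℕ)) rfl
    refine exC_iff.2 ⟨_, (sdIndex_spec (setCode ∅)).1, ?_, Eventually.of_forall fun i => ?_⟩
    · simp [cset_sdIndex_setCode, hL]
    · simp [sdop_sdLearner, hD]
  · refine exC_iff.2 ⟨_, (sdIndex_spec (setCode hfin.toFinset)).1, ?_,
      (eventually_fincontent_eq hfin).mono fun i hi => ?_⟩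
    · simp [cset_sdIndex_setCode, hone]
    · have hi' : fincontent T i = hfin.toFinset := by ext; simp [← hi]
      simp [sdop_sdLearner, hi', hone]

section Iterative

variable (h : Learner)

def itStep (e : ℕ) (x : Option ℕ) : Part ℕ :=
  h (encode (some (e, x) : Option (ℕ × Option ℕ)))

def itRun (σ : List (Option ℕ)) : Part ℕ :=
  σ.foldl (fun p x => p.bind (itStep h · x)) (h (encode (none : Option (ℕ × Option ℕ))))

theorem itRun_append_singleton (σ : List (Option ℕ)) (x : Option ℕ) :
    itRun h (σ ++ [x]) = (itRun h σ).bind (itStep h · x) := by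
  simp [itRun]

theorem initSeg_succ (T : Text) (n : ℕ) : initSeg T (n + 1) = initSeg T n ++ [T n] := by
  simp [initSeg, List.range_succ]

theorem itop_eq_itRun (T : Text) (n : ℕ) : Itop h T n = itRun h (initSeg T n) := by
  induction n with
  | zero => rfl
  | succ n ih => rw [initSeg_succ, itRun_append_singleton, ← ih]; rfl

theorem itop_eq_of_tail {T₁ T₂ : Text} {m : ℕ} (hm : Itop h T₁ m = Itop h T₂ m)
    (htail : ∀ n ≥ m, T₁ n = T₂ n) : ∀ n ≥ m, Itop h T₁ n = Itop h T₂ n := by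
  intro n hn
  induction n, hn using Nat.le_induction with
  | base => exact hm
  | succ n hn ih => simp only [Itop, ih, htail n hn]

end Iterative

section Adversary

variable (T₀ : Text) (pick : List (Option ℕ) → Option ℕ)

def adversaryPrefix : ℕ → List (Option ℕ)
  | 0 => []
  | k + 1 => adversaryPrefix k ++ [T₀ k, pick (adversaryPrefix k ++ [T₀ k])]

def adversaryText : Text := fun n =>
  if n % 2 = 0 then T₀ (n / 2) else pick (adversaryPrefix T₀ pick (n / 2) ++ [T₀ (n / 2)])

theorem adversaryText_two_mul (k : ℕ) : adversaryText T₀ pick (2 * k) = T₀ k := by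
  simp [adversaryText]

theorem adversaryText_two_mul_add_one (k : ℕ) :
    adversaryText T₀ pick (2 * k + 1) = pick (adversaryPrefix T₀ pick k ++ [T₀ k]) := by
  simp [adversaryText, Nat.add_mod, Nat.add_div]

theorem initSeg_adversaryText (k : ℕ) :
    initSeg (adversaryText T₀ pick) (2 * k) = adversaryPrefix T₀ pick k := by
  induction k with
  | zero => rfl
  | succ k ih =>
    rw [show 2 * (k + 1) = 2 * k + 1 + 1 by ring, initSeg_succ, initSeg_succ, ih]
    simp [adversaryPrefix, adversaryText_two_mul, adversaryText_two_mul_add_one]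

theorem content_adversaryText (hpick : ∀ σ x, pick σ = some x → x ∈ content T₀) :
    content (adversaryText T₀ pick) = content T₀ := by
  refine Set.Subset.antisymm (fun x ⟨n, hn⟩ => ?_)
    fun x ⟨n, hn⟩ => ⟨2 * n, by rw [adversaryText_two_mul, hn]⟩
  unfold adversaryText at hn
  split_ifs at hn
  exacts [⟨_, hn⟩, hpick _ _ hn]

end Adversary

theorem exists_absorbing_state {h : Learner} {L : Set ℕ} (hL : Learns Itop ExC h L) :
    ∃ σ e, itRun h σ = Part.some e ∧ ∀ x ∈ L, itStep h e (some x) = Part.some e := by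
  by_contra! hmove
  have hpick : ∀ σ, ∃ y : Option ℕ, (∀ x, y = some x → x ∈ L) ∧
      ∀ e, itRun h σ = Part.some e → itStep h e y ≠ Part.some e := by
    intro σ
    by_cases hσ : ∃ e, itRun h σ = Part.some e
    · obtain ⟨e, he⟩ := hσ
      obtain ⟨x, hx, hxe⟩ := hmove σ e he
      refine ⟨some x, by simpa using hx, fun e' he' => ?_⟩
      obtain rfl := Part.some_injective (he.symm.trans he')
      exact hxe
    · exact ⟨none, by simp, fun e he => absurd ⟨e, he⟩ hσ⟩
  choose pick hpickL hpick using hpick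
  obtain ⟨T₀, hT₀⟩ := exists_text L
  obtain ⟨e, -, -, hconv⟩ := exC_iff.1 <| hL (adversaryText T₀ pick) <|
    (content_adversaryText T₀ pick fun σ x hx => hT₀ ▸ hpickL σ x hx).trans hT₀
  obtain ⟨k, hk⟩ := eventually_atTop.1 hconv
  have hodd : Itop h (adversaryText T₀ pick) (2 * k + 1) = Part.some e := hk _ (by omega)
  have hrun : itRun h (adversaryPrefix T₀ pick k ++ [T₀ k]) = Part.some e := by
    rw [← hodd, itop_eq_itRun, initSeg_succ, initSeg_adversaryText, adversaryText_two_mul]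
  refine hpick _ e hrun ?_
  have heven : Itop h (adversaryText T₀ pick) (2 * k + 1 + 1) = Part.some e := hk _ (by omega)
  rwa [Itop, hodd, Part.bind_some, adversaryText_two_mul_add_one] at heven

def trapText (σ : List (Option ℕ)) (x : ℕ) : Text := fun n => (σ ++ [some x]).getD n (some 1)

theorem initSeg_trapText (σ : List (Option ℕ)) (x : ℕ) :
    initSeg (trapText σ x) (σ.length + 1) = σ ++ [some x] :=
  List.ext_getElem (by simp [initSeg]) fun n _ hn => by
    simp [initSeg, trapText, List.getElem?_eq_getElem hn]

theorem trapText_of_le {σ : List (Option ℕ)} (x : ℕ) {n : ℕ} (hn : σ.length + 1 ≤ n) :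
    trapText σ x n = some 1 :=
  List.getD_eq_default _ _ (by simpa using hn)

theorem content_trapText (σ : List (Option ℕ)) (x : ℕ) :
    content (trapText σ x) = ↑(insert 1 (insert x σ.reduceOption.toFinset)) := by
  ext y
  simp only [content, Set.mem_ofPred_eq, Finset.coe_insert, Set.mem_insert_iff, Finset.mem_coe,
    List.mem_toFinset, List.reduceOption_mem_iff]
  constructor
  · rintro ⟨n, hn⟩
    by_cases hlt : n < (σ ++ [some x]).length
    · have hmem := List.getElem_mem hlt
      rw [trapText, List.getD_eq_getElem _ _ hlt] at hn
      simp only [hn, List.mem_append, List.mem_singleton, Option.some.injEq] at hmem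
      tauto
    · rw [trapText_of_le x (by simpa using hlt)] at hn
      simp_all
  · rintro (rfl | rfl | hy)
    · exact ⟨σ.length + 1, trapText_of_le _ le_rfl⟩
    · exact ⟨σ.length, by simp [trapText]⟩
    · obtain ⟨i, hi, hiy⟩ := List.mem_iff_getElem.1 hy
      exact ⟨i, by
        simp [trapText, List.getElem?_append_left hi, List.getElem?_eq_getElem hi, hiy]⟩

theorem not_learns_itop_separatingClass (h : Learner) :
    ¬ ∀ L ∈ separatingClass, Learns Itop ExC h L := by
  intro hlearn
  obtain ⟨σ, e, hσ, habsorb⟩ := exists_absorbing_state (hlearn _ (Set.mem_insert _ _))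
  obtain ⟨a, ha⟩ := Infinite.exists_notMem_finset (insert 1 σ.reduceOption.toFinset)
  obtain ⟨b, hb⟩ := Infinite.exists_notMem_finset (insert a (insert 1 σ.reduceOption.toFinset))
  simp only [Finset.mem_insert, not_or] at ha hb
  have htrap : ∀ x ≠ 1, Itop h (trapText σ x) (σ.length + 1) = Part.some e := fun x hx => by
    rw [itop_eq_itRun, initSeg_trapText, itRun_append_singleton, hσ, Part.bind_some]
    exact habsorb x hx
  have hlearns : ∀ x, ExC (Itop h (trapText σ x)) (trapText σ x) := fun x =>
    hlearn _ (Or.inr ⟨Finset.finite_toSet _, Finset.mem_coe.2 (Finset.mem_insert_self _ _)⟩) _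
      (content_trapText σ x)
  have hcontent := (hlearns a).content_eq (hlearns b) <| eventually_atTop.2 ⟨_,
    itop_eq_of_tail h ((htrap a ha.1).trans (htrap b hb.2.1).symm)
      fun n hn => (trapText_of_le a hn).trans (trapText_of_le b hn).symm⟩
  have hab : a ∈ content (trapText σ b) := hcontent ▸ ⟨σ.length, by simp [trapText]⟩
  simp only [content_trapText, Finset.coe_insert, Set.mem_insert_iff, Finset.mem_coe] at hab
  rcases hab with h1 | rfl | hσa
  exacts [ha.1 h1, hb.1 rfl, ha.2 hσa]

/-- There is a class of recursive languages in `[TxtSdEx_C]_REC` but not in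
`[TxtItEx_C]_REC`. -/
theorem sd_exC_not_it_exC :
    ∃ ℒ : Set (Set ℕ),
      ℒ ∈ LearnableREC PartComputable Sdop ExC ∧
      ℒ ∉ LearnableREC PartComputable Itop ExC :=
  ⟨separatingClass,
    ⟨fun L hL => (learns_sdLearner L hL).recLang, sdLearner, partComputable_sdLearner,
      learns_sdLearner⟩,
    fun ⟨_, h, _, hlearn⟩ => not_learns_itop_separatingClass h hlearn⟩

end InductiveInference
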